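/- Drift coefficient asymptotics for the rescaled logistic branching process. Under the standing assumptions, for every compact set K ⊆ ℝ, writing x̂ := μ_N + x σ_N, one has lim_{N→∞} sup_{x ∈ E_N ∩ K, x̂ ≥ 1} | (1/σ_N) ( π̄ h_N(x̂) x̂ − ρ_N^{−1} (d_N x̂ + c_N x̂ (x̂ − 1)) ) + π̄ x | = 0; that is, the normalised mean jump rate of the time-rescaled, centred and normalised logistic branching process converges to the Ornstein–Uhlenbeck drift −π̄ x, uniformly on compact sets intersected with the lattice E_N. -/

import Mathlib

/-!
Write `x̂ = μ + x σ` with `σ² = μ = π̄ ρ / c`. Since `c / ρ = π̄ / σ²`, the normalised drift error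
is exactly `π̄ ((h(x̂) - 1) x̂ / σ + (1 - x² - d / c) / σ + (1 - d / c) x / σ²)`. For `x` in a
bounded set, `|h(x̂) - 1| = O(ε |x| / σ)` and `x̂ = O(σ²)`, so the first term is `O(ε)` and the
others are `O(1 / σ)`; all of them vanish because `σ → ∞`, `ε → 0` and `d / c → 0`.
-/

open Filter Topology

lemma one_le_of_hasSum_nat_mul {π : ℕ → ℝ} {m : ℝ} (h0 : π 0 = 0) (hnn : ∀ j, 0 ≤ π j)
    (hsum : ∑' j, π j = 1) (hm : HasSum (fun j : ℕ => (j : ℝ) * π j) m) : 1 ≤ m := by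
  have hle : ∀ j : ℕ, π j ≤ j * π j := by
    rintro (_ | j)
    · simp [h0]
    · exact le_mul_of_one_le_left (hnn _) (by simp)
  have hs : Summable π := .of_nonneg_of_le hnn hle hm.summable
  exact hasSum_le hle (hsum ▸ hs.hasSum) hm

lemma tendsto_sSup_image_of_le {ι α : Type*} {l : Filter ι} (f : ι → α → ℝ) (S : ι → Set α)
    {B : ι → ℝ} (hf : ∀ i a, 0 ≤ f i a) (hfB : ∀ i, ∀ a ∈ S i, f i a ≤ B i)
    (hB : Tendsto B l (𝓝 0)) : Tendsto (fun i => sSup (f i '' S i)) l (𝓝 0) := by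
  have hmax : Tendsto (fun i => max (B i) 0) l (𝓝 0) := by
    simpa using hB.max (tendsto_const_nhds (x := (0 : ℝ)))
  refine tendsto_of_tendsto_of_tendsto_of_le_of_le tendsto_const_nhds hmax
    (fun i => Real.sSup_nonneg ?_) (fun i => Real.sSup_le ?_ (le_max_right _ _))
  · rintro _ ⟨a, -, rfl⟩
    exact hf i a
  · rintro _ ⟨a, ha, rfl⟩
    exact (hfB i a ha).trans (le_max_left _ _)

section Drift

variable {πbar σ e h k x : ℝ}

lemma drift_error_eq (hσ : σ ≠ 0) (hk : k = σ ^ 2 + x * σ) :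
    (1 / σ) * (πbar * h * k - πbar / σ ^ 2 * (e * k + k * (k - 1))) + πbar * x
      = πbar * ((h - 1) * k / σ + (1 - x ^ 2 - e) / σ + (1 - e) * x / σ ^ 2) := by
  subst hk
  field_simp
  ring

lemma abs_drift_error_le {δ R : ℝ} (hπ : 0 ≤ πbar) (hσ : 0 < σ) (hδ : 0 ≤ δ)
    (hk : k = σ ^ 2 + x * σ) (hxR : |x| ≤ R) (hh : |h - 1| ≤ δ * |x| / σ) :
    |(1 / σ) * (πbar * h * k - πbar / σ ^ 2 * (e * k + k * (k - 1))) + πbar * x|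
      ≤ πbar * (δ * R * (1 + R / σ) + (1 + R ^ 2 + |e|) / σ + (1 + |e|) * R / σ ^ 2) := by
  rw [drift_error_eq hσ.ne' hk, abs_mul, abs_of_nonneg hπ]
  gcongr
  have hR : 0 ≤ R := (abs_nonneg x).trans hxR
  have hx2 : x ^ 2 ≤ R ^ 2 := sq_le_sq' (abs_le.mp hxR).1 (abs_le.mp hxR).2
  have hjump : |(h - 1) * k / σ| ≤ δ * R * (1 + R / σ) :=
    calc |(h - 1) * k / σ| = |h - 1| * |σ + x| := by
          rw [hk, show σ ^ 2 + x * σ = σ * (σ + x) by ring, abs_div, abs_mul, abs_mul,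
            abs_of_pos hσ]
          field_simp
      _ ≤ δ * |x| / σ * (σ + |x|) := by
          gcongr
          exact (abs_add_le _ _).trans_eq (by rw [abs_of_pos hσ])
      _ = δ * |x| * (1 + |x| / σ) := by field_simp
      _ ≤ δ * R * (1 + R / σ) := by gcongr
  have hconst : |(1 - x ^ 2 - e) / σ| ≤ (1 + R ^ 2 + |e|) / σ := by
    rw [abs_div, abs_of_pos hσ]
    gcongr
    calc |1 - x ^ 2 - e| ≤ |1 - x ^ 2| + |e| := abs_sub _ _
      _ ≤ 1 + |x ^ 2| + |e| := by gcongr; exact (abs_sub 1 (x ^ 2)).trans_eq (by rw [abs_one])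
      _ ≤ 1 + R ^ 2 + |e| := by rw [abs_of_nonneg (sq_nonneg x)]; gcongr
  have hlin : |(1 - e) * x / σ ^ 2| ≤ (1 + |e|) * R / σ ^ 2 := by
    rw [abs_div, abs_mul, abs_of_pos (by positivity : 0 < σ ^ 2)]
    gcongr
    exact (abs_sub 1 e).trans_eq (by rw [abs_one])
  calc _ ≤ |(h - 1) * k / σ + (1 - x ^ 2 - e) / σ| + |(1 - e) * x / σ ^ 2| := abs_add_le _ _
    _ ≤ |(h - 1) * k / σ| + |(1 - x ^ 2 - e) / σ| + |(1 - e) * x / σ ^ 2| := by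
        gcongr; exact abs_add_le _ _
    _ ≤ _ := by gcongr

end Drift

lemma abs_logistic_drift_error_le {πbar ρ c d μ σ h k C ε R : ℝ} (hπ : 0 < πbar) (hρ : 0 < ρ)
    (hc : 0 < c) (hμ : μ = πbar * ρ / c) (hσ : σ = √μ) (hxR : |(k - μ) / σ| ≤ R)
    (hh : |h - 1| ≤ C * ε * |k - μ| / μ) :
    |(1 / σ) * (πbar * h * k - ρ⁻¹ * (d * k + c * k * (k - 1))) + πbar * ((k - μ) / σ)|
      ≤ πbar * (|C * ε| * R * (1 + R / σ) + (1 + R ^ 2 + |d / c|) / σ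
          + (1 + |d / c|) * R / σ ^ 2) := by
  have hμpos : 0 < μ := hμ ▸ by positivity
  have hσpos : 0 < σ := hσ ▸ Real.sqrt_pos.mpr hμpos
  have hσsq : σ ^ 2 = μ := hσ ▸ Real.sq_sqrt hμpos.le
  have hrate : ρ⁻¹ * (d * k + c * k * (k - 1)) = πbar / σ ^ 2 * (d / c * k + k * (k - 1)) := by
    rw [hσsq, hμ]
    field_simp
  rw [hrate]
  refine abs_drift_error_le hπ.le hσpos (abs_nonneg _) ?_ hxR ?_
  · field_simp
    rw [hσsq]
    ring
  · calc |h - 1| ≤ C * ε * |k - μ| / μ := hh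
      _ ≤ |C * ε| * |k - μ| / μ := by gcongr; exact le_abs_self _
      _ = |C * ε| * |(k - μ) / σ| / σ := by
          rw [abs_div, abs_of_pos hσpos, ← hσsq]
          field_simp

lemma tendsto_drift_bound {ι : Type*} {l : Filter ι} {δ e σ : ι → ℝ} (πbar R : ℝ)
    (hδ : Tendsto δ l (𝓝 0)) (he : Tendsto e l (𝓝 0)) (hσ : Tendsto σ l atTop) :
    Tendsto (fun i => πbar * (|δ i| * R * (1 + R / σ i) + (1 + R ^ 2 + |e i|) / σ i
      + (1 + |e i|) * R / σ i ^ 2)) l (𝓝 0) := by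
  have hσsq : Tendsto (fun i => σ i ^ 2) l atTop := (tendsto_pow_atTop two_ne_zero).comp hσ
  have hjump : Tendsto (fun i => |δ i| * R * (1 + R / σ i)) l (𝓝 0) := by
    simpa using (hδ.abs.mul_const R).mul (tendsto_const_nhds.add (tendsto_const_nhds.div_atTop hσ))
  have hconst : Tendsto (fun i => (1 + R ^ 2 + |e i|) / σ i) l (𝓝 0) :=
    (tendsto_const_nhds.add he.abs).div_atTop hσ
  have hlin : Tendsto (fun i => (1 + |e i|) * R / σ i ^ 2) l (𝓝 0) :=
    ((tendsto_const_nhds.add he.abs).mul_const R).div_atTop hσsq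
  simpa using ((hjump.add hconst).add hlin).const_mul πbar

theorem logistic_drift_asymptotics_general
    (π : ℕ → ℝ) (hπ0 : π 0 = 0) (hπnn : ∀ j, 0 ≤ π j) (hπsum : ∑' j : ℕ, π j = 1)
    (πbar : ℝ)
    (hmean : HasSum (fun j : ℕ => (j : ℝ) * π j) πbar)
    (ρ d c : ℕ → ℝ) (h : ℕ → ℕ → ℝ)
    (hρ : ∀ N, 0 < ρ N) (hc : ∀ N, 0 < c N)
    (μ σ : ℕ → ℝ)
    (hμ : ∀ N, μ N = πbar * ρ N / c N) (hσ : ∀ N, σ N = Real.sqrt (μ N))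
    (hρc : Tendsto (fun N => ρ N / c N) atTop atTop)
    (hdc : Tendsto (fun N => d N / c N) atTop (nhds 0))
    (hh : ∃ C : ℝ, ∃ ε : ℕ → ℝ, Tendsto ε atTop (nhds 0) ∧
      ∀ N k, |h N k - 1| ≤ C * ε N * |(k : ℝ) - μ N| / μ N)
    (K : Set ℝ) (hK : IsCompact K) :
    Tendsto (fun N : ℕ =>
      sSup ((fun k : ℕ =>
        |(1 / σ N) * (πbar * h N k * (k : ℝ)
            - (ρ N)⁻¹ * (d N * (k : ℝ) + c N * (k : ℝ) * ((k : ℝ) - 1)))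
          + πbar * (((k : ℝ) - μ N) / σ N)|)
        '' {k : ℕ | 1 ≤ k ∧ ((k : ℝ) - μ N) / σ N ∈ K}))
      atTop (nhds 0) := by
  obtain ⟨C, ε, hε, hεh⟩ := hh
  have hπ : 0 < πbar := one_pos.trans_le (one_le_of_hasSum_nat_mul hπ0 hπnn hπsum hmean)
  obtain ⟨R, hR⟩ := hK.isBounded.exists_norm_le
  have hσtop : Tendsto σ atTop atTop := by
    have hμtop : Tendsto μ atTop atTop :=
      (hρc.const_mul_atTop hπ).congr fun N => by rw [hμ, mul_div_assoc]
    exact (Real.tendsto_sqrt_atTop.comp hμtop).congr fun N => (hσ N).symm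
  have hCε : Tendsto (fun N => C * ε N) atTop (𝓝 0) := by simpa using hε.const_mul C
  refine tendsto_sSup_image_of_le _ _ (fun N k => abs_nonneg _) ?_
    (tendsto_drift_bound πbar R hCε hdc hσtop)
  rintro N k ⟨-, hkK⟩
  exact abs_logistic_drift_error_le hπ (hρ N) (hc N) (hμ N) (hσ N) (hR _ hkK) (hεh N k)

/-- Drift coefficient asymptotics for the rescaled logistic branching process:
the normalised mean jump rate converges to the Ornstein–Uhlenbeck drift `-π̄ x`,
uniformly on compact sets intersected with the lattice `E_N` (states `x̂ ≥ 1`). -/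
theorem logistic_drift_asymptotics
    (π : ℕ → ℝ) (hπ0 : π 0 = 0) (hπnn : ∀ j, 0 ≤ π j) (hπsum : ∑' j : ℕ, π j = 1)
    (πbar v2 : ℝ)
    (hmean : HasSum (fun j : ℕ => (j : ℝ) * π j) πbar)
    (hsecond : HasSum (fun j : ℕ => (j : ℝ) ^ 2 * π j) v2)
    (hthird : Summable (fun j : ℕ => (j : ℝ) ^ 3 * π j))
    (ρ d c : ℕ → ℝ) (h : ℕ → ℕ → ℝ)
    (hρ : ∀ N, 0 < ρ N) (hd : ∀ N, 0 ≤ d N) (hc : ∀ N, 0 < c N)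
    (hhpos : ∀ N k, 0 < h N k) (hhbdd : ∀ N, ∃ M : ℝ, ∀ k, h N k ≤ M)
    (μ σ : ℕ → ℝ)
    (hμ : ∀ N, μ N = πbar * ρ N / c N) (hσ : ∀ N, σ N = Real.sqrt (μ N))
    (hρ0 : Tendsto ρ atTop (nhds 0))
    (hρc : Tendsto (fun N => ρ N / c N) atTop atTop)
    (hdc : Tendsto (fun N => d N / c N) atTop (nhds 0))
    (hh : ∃ C : ℝ, ∃ ε : ℕ → ℝ, Tendsto ε atTop (nhds 0) ∧
      ∀ N k, |h N k - 1| ≤ C * ε N * |(k : ℝ) - μ N| / μ N)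
    (K : Set ℝ) (hK : IsCompact K) :
    Tendsto (fun N : ℕ =>
      sSup ((fun k : ℕ =>
        |(1 / σ N) * (πbar * h N k * (k : ℝ)
            - (ρ N)⁻¹ * (d N * (k : ℝ) + c N * (k : ℝ) * ((k : ℝ) - 1)))
          + πbar * (((k : ℝ) - μ N) / σ N)|)
        '' {k : ℕ | 1 ≤ k ∧ ((k : ℝ) - μ N) / σ N ∈ K}))
      atTop (nhds 0) :=
  logistic_drift_asymptotics_general π hπ0 hπnn hπsum πbar hmean ρ d c h hρ hc μ σ hμ hσ hρc hdc hh
    K hK
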